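/- Under the regularity assumptions, the transition kernel P(π) of the MDP with Bernoulli treatments is a contraction for the graph-dependent Wasserstein distance W_{d_E}: for any two probability distributions ν₁, ν₂ on {0,1}^n, W_{d_E}(ν₁ P(π), ν₂ P(π)) ≤ C·W_{d_E}(ν₁, ν₂). -/

import Mathlib

open Finset Filter Topology

noncomputable section

namespace MRT

/-- The state space: binary outcomes for each of the `n` units. -/
abbrev State (n : ℕ) := Fin n → Bool

variable {n : ℕ}

/-- `zc Nbr y i` is `Z_i(y) = ∑_{j ∈ 𝒩_i} y_j`, the number of active neighbors of `i`. -/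
def zc (Nbr : Fin n → Finset (Fin n)) (y : State n) (i : Fin n) : ℝ :=
  ∑ j ∈ Nbr i, (if y j then (1 : ℝ) else 0)

/-- Probability that coordinate `i` is `1` at the next step, starting from state `y`,
under Bernoulli(π i) treatments. -/
def succProb (Nbr : Fin n → Finset (Fin n)) (f : Fin n → Bool → Bool → ℝ → ℝ)
    (π : Fin n → ℝ) (y : State n) (i : Fin n) : ℝ :=
  π i * f i (y i) true (zc Nbr y i) + (1 - π i) * f i (y i) false (zc Nbr y i)

/-- Transition kernel `P(π)` of the MDP with Bernoulli treatments. -/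
def kernel (Nbr : Fin n → Finset (Fin n)) (f : Fin n → Bool → Bool → ℝ → ℝ)
    (π : Fin n → ℝ) (y y' : State n) : ℝ :=
  ∏ i, if y' i then succProb Nbr f π y i else 1 - succProb Nbr f π y i

/-- One-step pushforward `ν P(π)` of a distribution `ν` under the kernel. -/
def step (Nbr : Fin n → Finset (Fin n)) (f : Fin n → Bool → Bool → ℝ → ℝ)
    (π : Fin n → ℝ) (ν : State n → ℝ) : State n → ℝ :=
  fun y' => ∑ y, ν y * kernel Nbr f π y y'

/-- `ν` is a probability distribution on `{0,1}^n`. -/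
def IsDist (ν : State n → ℝ) : Prop := (∀ y, 0 ≤ ν y) ∧ ∑ y, ν y = 1

/-- `μ` is a stationary probability distribution for the kernel. -/
def IsStationary (Nbr : Fin n → Finset (Fin n)) (f : Fin n → Bool → Bool → ℝ → ℝ)
    (π : Fin n → ℝ) (μ : State n → ℝ) : Prop :=
  IsDist μ ∧ step Nbr f π μ = μ

/-- Expectation of `g` under the (finitely supported) distribution `ν`. -/
def expect (ν : State n → ℝ) (g : State n → ℝ) : ℝ := ∑ y, ν y * g y

/-- `γ` is a coupling of `ν₁` and `ν₂`. -/
def IsCoupling (γ : State n × State n → ℝ) (ν₁ ν₂ : State n → ℝ) : Prop :=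
  (∀ p, 0 ≤ γ p) ∧ (∀ x, ∑ y, γ (x, y) = ν₁ x) ∧ (∀ y, ∑ x, γ (x, y) = ν₂ y)

/-- `∑ i |x_i - y_i|` for binary vectors. -/
def hamming (x y : State n) : ℝ := ∑ i : Fin n, (if x i = y i then (0:ℝ) else 1)

/-- The `L1`-Wasserstein distance between two distributions on `{0,1}^n`. -/
def WL1 (ν₁ ν₂ : State n → ℝ) : ℝ :=
  sInf {c | ∃ γ, IsCoupling γ ν₁ ν₂ ∧ c = ∑ p : State n × State n, γ p * hamming p.1 p.2}

/-- `∑_{j ∈ 𝒩_i} |x_j - y_j|` for binary vectors. -/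
def nbrDiff (Nbr : Fin n → Finset (Fin n)) (i : Fin n) (x y : State n) : ℝ :=
  ∑ j ∈ Nbr i, (if x j = y j then (0:ℝ) else 1)

/-- The graph-dependent Wasserstein distance `W_{d_{E,k}}`. -/
def WdE (Nbr : Fin n → Finset (Fin n)) (k : ℕ) (ν₁ ν₂ : State n → ℝ) : ℝ :=
  sInf {c | ∃ γ, IsCoupling γ ν₁ ν₂ ∧
    c = ⨆ i : Fin n,
      (∑ p : State n × State n, γ p * (nbrDiff Nbr i p.1 p.2) ^ k) ^ ((k : ℝ)⁻¹)}

/-- Multilinear extension of `f i` to probabilities `p, w ∈ [0,1]`: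
`f_i(p,w,z) = a_i(z) + b_i(z) w + c_i(z) p + d_i(z) w p`. -/
def fext (f : Fin n → Bool → Bool → ℝ → ℝ) (i : Fin n) (p w z : ℝ) : ℝ :=
  f i false false z + (f i false true z - f i false false z) * w +
    (f i true false z - f i false false z) * p +
    (f i true true z - f i false true z - f i true false z + f i false false z) * w * p

/-- `Q_i = ∑_{j ∈ 𝒩_i} P_j`. -/
def mfQ (Nbr : Fin n → Finset (Fin n)) (P : Fin n → ℝ) (i : Fin n) : ℝ := ∑ j ∈ Nbr i, P j

/-- One step of the mean-field dynamical system. -/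
def mfStep (Nbr : Fin n → Finset (Fin n)) (f : Fin n → Bool → Bool → ℝ → ℝ)
    (π : Fin n → ℝ) (P : Fin n → ℝ) : Fin n → ℝ :=
  fun i => fext f i (P i) (π i) (mfQ Nbr P i)

/-- `P` is a fixed point of the mean-field dynamical system, lying in `[0,1]^n`. -/
def IsMFFixed (Nbr : Fin n → Finset (Fin n)) (f : Fin n → Bool → Bool → ℝ → ℝ)
    (π : Fin n → ℝ) (P : Fin n → ℝ) : Prop :=
  (∀ i, P i ∈ Set.Icc (0:ℝ) 1) ∧ mfStep Nbr f π P = P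

/-- Law of a vector of independent Bernoulli(P i) coordinates. -/
def prodLaw (P : Fin n → ℝ) (y : State n) : ℝ := ∏ i, if y i then P i else 1 - P i

/-- Probability of the treatment vector `w` under independent Bernoulli(π i). -/
def wProb (π : Fin n → ℝ) (w : State n) : ℝ := ∏ i, if w i then π i else 1 - π i

/-- Conditional probability of the next state `y'` given state `y` and treatments `w`. -/
def condProb (Nbr : Fin n → Finset (Fin n)) (f : Fin n → Bool → Bool → ℝ → ℝ)
    (y w y' : State n) : ℝ :=
  ∏ i, if y' i then f i (y i) (w i) (zc Nbr y i) else 1 - f i (y i) (w i) (zc Nbr y i)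

/-- Probability of the trajectory `(Y_1, …, Y_{T+1}; W_1, …, W_T)` (indexed from `0` in Lean)
of the MDP with Bernoulli treatments, with initial distribution `ν₀`. -/
def trajProb (Nbr : Fin n → Finset (Fin n)) (f : Fin n → Bool → Bool → ℝ → ℝ)
    (π : Fin n → ℝ) (T : ℕ) (ν₀ : State n → ℝ)
    (Y : Fin (T + 1) → State n) (W : Fin T → State n) : ℝ :=
  ν₀ (Y 0) * ∏ t : Fin T, wProb π (W t) * condProb Nbr f (Y t.castSucc) (W t) (Y t.succ)

/-- The estimator `f̂_i(y,w)` computed from the trajectory (convention `0/0 = 0`,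
which is Lean's division). -/
def fhat {T : ℕ} (Y : Fin (T + 1) → State n) (W : Fin T → State n)
    (i : Fin n) (y w : Bool) : ℝ :=
  (∑ t : Fin T, if Y t.castSucc i = y ∧ W t i = w then (if Y t.succ i then (1:ℝ) else 0) else 0) /
  (∑ t : Fin T, if Y t.castSucc i = y ∧ W t i = w then (1:ℝ) else 0)

/-- The undirected-graph structure: symmetric neighborhoods without self-loops. -/
def GoodGraph (Nbr : Fin n → Finset (Fin n)) : Prop :=
  (∀ i j, i ∈ Nbr j ↔ j ∈ Nbr i) ∧ ∀ i, i ∉ Nbr i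

/-- `f` takes values strictly between 0 and 1. -/
def PosF (f : Fin n → Bool → Bool → ℝ → ℝ) : Prop :=
  ∀ i y w z, 0 ≤ z → f i y w z ∈ Set.Ioo (0:ℝ) 1

/-- The regularity assumptions: `L`-Lipschitzness in the third argument, the bound `B` on
the effect of the first argument, maximal degree `D`, and the contraction condition
`B + L·D ≤ C < 1`. -/
def Regular (Nbr : Fin n → Finset (Fin n)) (f : Fin n → Bool → Bool → ℝ → ℝ)
    (L B : ℝ) (D : ℕ) (C : ℝ) : Prop :=
  0 ≤ L ∧
  (∀ i y w z₁ z₂, 0 ≤ z₁ → 0 ≤ z₂ → |f i y w z₁ - f i y w z₂| ≤ L * |z₁ - z₂|) ∧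
  (∀ i w z, 0 ≤ z → |f i true w z - f i false w z| ≤ B) ∧
  (∀ i, (Nbr i).card ≤ D) ∧
  B + L * D ≤ C ∧ C < 1

/-- Adjacency matrix of the interference graph. -/
def adjMat (Nbr : Fin n → Finset (Fin n)) : Matrix (Fin n) (Fin n) ℝ :=
  Matrix.of fun i j => if j ∈ Nbr i then (1:ℝ) else 0


/-- Indicator of `Y_i = 1` as a real-valued function of the state. -/
def Yi (i : Fin n) (s : State n) : ℝ := if s i then 1 else 0

/-- `a_i(z) = f_i(0,0,z)`. -/
def aF (f : Fin n → Bool → Bool → ℝ → ℝ) (i : Fin n) (z : ℝ) : ℝ := f i false false z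

/-- `b_i(z) = f_i(0,1,z) - f_i(0,0,z)`. -/
def bF (f : Fin n → Bool → Bool → ℝ → ℝ) (i : Fin n) (z : ℝ) : ℝ :=
  f i false true z - f i false false z

/-- `c_i(z) = f_i(1,0,z) - f_i(0,0,z)`. -/
def cF (f : Fin n → Bool → Bool → ℝ → ℝ) (i : Fin n) (z : ℝ) : ℝ :=
  f i true false z - f i false false z

/-- `d_i(z) = f_i(1,1,z) - f_i(0,1,z) - f_i(1,0,z) + f_i(0,0,z)`. -/
def dF (f : Fin n → Bool → Bool → ℝ → ℝ) (i : Fin n) (z : ℝ) : ℝ :=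
  f i true true z - f i false true z - f i true false z + f i false false z

/-- `â_i` computed from the trajectory. -/
def ahat {T : ℕ} (Y : Fin (T + 1) → State n) (W : Fin T → State n) (i : Fin n) : ℝ :=
  fhat Y W i false false

/-- `b̂_i` computed from the trajectory. -/
def bhat {T : ℕ} (Y : Fin (T + 1) → State n) (W : Fin T → State n) (i : Fin n) : ℝ :=
  fhat Y W i false true - fhat Y W i false false

/-- `ĉ_i` computed from the trajectory. -/
def chat {T : ℕ} (Y : Fin (T + 1) → State n) (W : Fin T → State n) (i : Fin n) : ℝ :=
  fhat Y W i true false - fhat Y W i false false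

/-- `d̂_i` computed from the trajectory. -/
def dhat {T : ℕ} (Y : Fin (T + 1) → State n) (W : Fin T → State n) (i : Fin n) : ℝ :=
  fhat Y W i true true + fhat Y W i false false - fhat Y W i false true - fhat Y W i true false

/-- The plug-in estimator `τ̂_LDE(γ₁, γ₂)` of the long-term direct effect. -/
def ldeHat {T : ℕ} (Y : Fin (T + 1) → State n) (W : Fin T → State n) (γ₁ γ₂ : ℝ) : ℝ :=
  (1 / (n : ℝ)) * ∑ i : Fin n,
    ((ahat Y W i + bhat Y W i * γ₁) / (1 - chat Y W i - dhat Y W i * γ₁) -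
      (ahat Y W i + bhat Y W i * γ₂) / (1 - chat Y W i - dhat Y W i * γ₂))

/-- `P̂_i = (1/T) ∑_{t=1}^T Y_{it}`. -/
def Phat {T : ℕ} (Y : Fin (T + 1) → State n) (i : Fin n) : ℝ :=
  (∑ t : Fin T, if Y t.castSucc i then (1 : ℝ) else 0) / T

/-- The regression estimator `f̂'_i(y,w)_{δ_T}` of the derivative of `f_i` in its third
argument, computed from the trajectory (`Dr` is the degree bound `D_n`, `δ` is `δ_T`). -/
def fhatD (Nbr : Fin n → Finset (Fin n)) {T : ℕ}
    (Y : Fin (T + 1) → State n) (W : Fin T → State n)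
    (i : Fin n) (y w : Bool) (Dr δ : ℝ) : ℝ :=
  let ind : Fin T → ℝ := fun t => if Y t.castSucc i = y ∧ W t i = w then 1 else 0
  let cnt : ℝ := ∑ t, ind t
  let Ybar : ℝ := (∑ t, ind t * (if Y t.succ i then (1 : ℝ) else 0)) / cnt
  let Zbar : ℝ := (∑ t, ind t * zc Nbr (Y t.castSucc) i) / cnt
  (∑ t, ind t * ((if Y t.succ i then (1 : ℝ) else 0) - Ybar) * (zc Nbr (Y t.castSucc) i - Zbar)) /
    max (Dr * T * δ) (∑ t, ind t * (zc Nbr (Y t.castSucc) i - Zbar) ^ 2)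

/-- The plug-in estimator `τ̂_LTE(π + Δv, π)/Δ = (1/n)·𝟙ᵀ(M_η − D̂A − Ŵ_κ)⁻¹ û`
of the (rescaled) long-term total effect. -/
def lteHatOverDelta (Nbr : Fin n → Finset (Fin n)) (π v : Fin n → ℝ) {T : ℕ}
    (Y : Fin (T + 1) → State n) (W : Fin T → State n) (Dn : ℕ) (δ η κ : ℝ) : ℝ :=
  let Dh : Fin n → ℝ := fun i =>
    (1 - π i) * (1 - Phat Y i) * fhatD Nbr Y W i false false Dn δ +
      π i * (1 - Phat Y i) * fhatD Nbr Y W i false true Dn δ +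
      Phat Y i * (1 - π i) * fhatD Nbr Y W i true false Dn δ +
      Phat Y i * π i * fhatD Nbr Y W i true true Dn δ
  let ω : Fin n → ℝ := fun i => min (1 - κ) (chat Y W i + dhat Y W i * π i)
  let u : Fin n → ℝ := fun i => (bhat Y W i + dhat Y W i * Phat Y i) * v i
  let Mη : Matrix (Fin n) (Fin n) ℝ :=
    Matrix.diagonal fun i => max 1 (Dh i * Dn / (1 - η) + ω i)
  (1 / (n : ℝ)) *
    ∑ i : Fin n, ((Mη - Matrix.diagonal Dh * adjMat Nbr - Matrix.diagonal ω)⁻¹.mulVec u) i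

end MRT


end

/-!
Couple the two chains synchronously: start from any coupling `γ` of `ν₁` and `ν₂`, and move
every coordinate with the monotone coupling of the two Bernoulli laws, independently across
coordinates. From a pair `(x, y)`, coordinate `j` then disagrees after one step with probability
`|p_j(x) - p_j(y)| ≤ B·1{x_j ≠ y_j} + L·∑_{k ∈ 𝒩_j} |x_k - y_k|`, where `p_j(x)` is the
probability that `j` becomes `1` from `x`; summing over `j ∈ 𝒩_i`
gives at most `B·d_i + L·∑_{j ∈ 𝒩_i} d_j ≤ (B + L·D)·max_j d_j`, where `d_j` is the `d_E`-cost
of `γ` at `j`.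
-/

noncomputable section

namespace MRT

section BernoulliCoupling

variable (p q : ℝ)

/-- The law of `(1{U < p}, 1{U < q})` for `U` uniform on `[0, 1]`. -/
def bernCoupling : Bool → Bool → ℝ
  | true, true => min p q
  | true, false => p - min p q
  | false, true => q - min p q
  | false, false => 1 - max p q

variable {p q} in
lemma bernCoupling_nonneg (hp : p ∈ Set.Icc (0 : ℝ) 1) (hq : q ∈ Set.Icc (0 : ℝ) 1)
    (a b : Bool) : 0 ≤ bernCoupling p q a b := by
  cases a <;> cases b <;> simp [bernCoupling, hp.1, hq.1, hp.2, hq.2]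

lemma sum_bernCoupling_left (a : Bool) :
    ∑ b, bernCoupling p q a b = if a then p else 1 - p := by
  have := min_add_max p q
  cases a <;> simp [bernCoupling]
  linarith

lemma sum_bernCoupling_right (b : Bool) :
    ∑ a, bernCoupling p q a b = if b then q else 1 - q := by
  have := min_add_max p q
  cases b <;> simp [bernCoupling]
  linarith

lemma sum_bernCoupling : ∑ c : Bool × Bool, bernCoupling p q c.1 c.2 = 1 := by
  rw [Fintype.sum_prod_type]
  simp only [sum_bernCoupling_left p q]
  simp

lemma sum_bernCoupling_mul_ne :
    ∑ c : Bool × Bool, bernCoupling p q c.1 c.2 * (if c.1 = c.2 then 0 else 1) = |p - q| := by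
  have := min_add_max p q
  have := max_sub_min_eq_abs' p q
  simp [Fintype.sum_prod_type, bernCoupling]
  linarith

end BernoulliCoupling

lemma sum_prod_pi_mul_apply {ι α R : Type*} [Fintype ι] [DecidableEq ι] [Fintype α]
    [CommSemiring R] (g : ι → α → R) (h : α → R) (j : ι) (hg : ∀ i ≠ j, ∑ c, g i c = 1) :
    ∑ z : ι → α, (∏ i, g i (z i)) * h (z j) = ∑ c, g j c * h c := by
  let g' : ι → α → R := fun i c => g i c * if i = j then h c else 1
  have hprod : ∀ z : ι → α, (∏ i, g i (z i)) * h (z j) = ∏ i, g' i (z i) := fun z => by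
    simp only [g', prod_mul_distrib, prod_ite_eq' univ j (fun i => h (z i)), mem_univ, if_true]
  simp_rw [hprod, ← Fintype.prod_sum]
  rw [prod_eq_single j (fun i _ hij => by simp [g', hij, hg i hij]) (by simp)]
  simp [g']

variable {n : ℕ}

def prodCoupling (p q : Fin n → ℝ) (z : State n × State n) : ℝ :=
  ∏ i, bernCoupling (p i) (q i) (z.1 i) (z.2 i)

section ProdCoupling

variable {p q : Fin n → ℝ}

lemma prodCoupling_nonneg (hp : ∀ i, p i ∈ Set.Icc (0 : ℝ) 1) (hq : ∀ i, q i ∈ Set.Icc (0 : ℝ) 1)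
    (z : State n × State n) : 0 ≤ prodCoupling p q z :=
  prod_nonneg fun i _ => bernCoupling_nonneg (hp i) (hq i) _ _

variable (p q)

lemma sum_prodCoupling_left (x : State n) : ∑ y, prodCoupling p q (x, y) = prodLaw p x := by
  rw [prodLaw, ← prod_congr rfl fun i _ => sum_bernCoupling_left (p i) (q i) (x i),
    Fintype.prod_sum]
  rfl

lemma sum_prodCoupling_right (y : State n) : ∑ x, prodCoupling p q (x, y) = prodLaw q y := by
  rw [prodLaw, ← prod_congr rfl fun i _ => sum_bernCoupling_right (p i) (q i) (y i),
    Fintype.prod_sum]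
  rfl

lemma sum_prodCoupling_mul_ne (j : Fin n) :
    ∑ z, prodCoupling p q z * (if z.1 j = z.2 j then 0 else 1) = |p j - q j| := by
  rw [← Equiv.sum_comp (Equiv.arrowProdEquivProdArrow (Fin n) (fun _ => Bool) (fun _ => Bool))]
  exact (sum_prod_pi_mul_apply (fun i (c : Bool × Bool) => bernCoupling (p i) (q i) c.1 c.2)
    (fun c : Bool × Bool => if c.1 = c.2 then 0 else 1) j fun i _ => sum_bernCoupling _ _).trans
    (sum_bernCoupling_mul_ne _ _)

end ProdCoupling

section Coupling

variable {ν₁ ν₂ : State n → ℝ} {γ : State n × State n → ℝ}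

lemma isCoupling_mul (h₁ : IsDist ν₁) (h₂ : IsDist ν₂) :
    IsCoupling (fun p => ν₁ p.1 * ν₂ p.2) ν₁ ν₂ :=
  ⟨fun p => mul_nonneg (h₁.1 _) (h₂.1 _),
    fun x => by simp only [← mul_sum, h₂.2, mul_one],
    fun y => by simp only [← sum_mul, h₁.2, one_mul]⟩

lemma IsCoupling.sum_mul_fst (hγ : IsCoupling γ ν₁ ν₂) (g : State n → ℝ) :
    ∑ p, γ p * g p.1 = ∑ x, ν₁ x * g x := by
  simp only [Fintype.sum_prod_type, ← sum_mul, hγ.2.1]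

lemma IsCoupling.sum_mul_snd (hγ : IsCoupling γ ν₁ ν₂) (g : State n → ℝ) :
    ∑ p, γ p * g p.2 = ∑ y, ν₂ y * g y := by
  simp only [Fintype.sum_prod_type_right, ← sum_mul, hγ.2.2]

end Coupling

lemma zc_nonneg (Nbr : Fin n → Finset (Fin n)) (y : State n) (i : Fin n) : 0 ≤ zc Nbr y i :=
  sum_nonneg fun _ _ => by positivity

lemma abs_zc_sub_le (Nbr : Fin n → Finset (Fin n)) (x y : State n) (i : Fin n) :
    |zc Nbr x i - zc Nbr y i| ≤ nbrDiff Nbr i x y := by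
  rw [zc, zc, ← sum_sub_distrib]
  refine (abs_sum_le_sum_abs _ _).trans (sum_le_sum fun k _ => ?_)
  cases x k <;> cases y k <;> simp

section Dynamics

variable {Nbr : Fin n → Finset (Fin n)} {f : Fin n → Bool → Bool → ℝ → ℝ} {π : Fin n → ℝ}
  {L B C : ℝ} {D : ℕ}

lemma succProb_mem_Icc (hf : PosF f) (hπ : ∀ i, π i ∈ Set.Icc (0 : ℝ) 1) (y : State n)
    (i : Fin n) : succProb Nbr f π y i ∈ Set.Icc (0 : ℝ) 1 := by
  obtain ⟨h₁, h₁'⟩ := hf i (y i) true _ (zc_nonneg Nbr y i)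
  obtain ⟨h₀, h₀'⟩ := hf i (y i) false _ (zc_nonneg Nbr y i)
  obtain ⟨hπ₀, hπ₁⟩ := hπ i
  constructor <;> unfold succProb <;> nlinarith

lemma Regular.B_nonneg (hReg : Regular Nbr f L B D C) (i : Fin n) : 0 ≤ B :=
  (abs_nonneg _).trans (hReg.2.2.1 i true 0 le_rfl)

lemma Regular.C_nonneg (hReg : Regular Nbr f L B D C) (i : Fin n) : 0 ≤ C :=
  (add_nonneg (hReg.B_nonneg i) (mul_nonneg hReg.1 D.cast_nonneg)).trans hReg.2.2.2.2.1

lemma Regular.abs_f_sub_le (hReg : Regular Nbr f L B D C) (x y : State n) (j : Fin n)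
    (w : Bool) :
    |f j (x j) w (zc Nbr x j) - f j (y j) w (zc Nbr y j)| ≤
      B * (if x j = y j then 0 else 1) + L * nbrDiff Nbr j x y := by
  obtain ⟨hL, hLip, hB, -⟩ := hReg
  have hzx := zc_nonneg Nbr x j
  have hfirst : |f j (x j) w (zc Nbr x j) - f j (y j) w (zc Nbr x j)| ≤
      B * (if x j = y j then 0 else 1) := by
    cases x j <;> cases y j <;> simp [abs_sub_comm (f j false w _), hB j w _ hzx]
  have hthird : |f j (y j) w (zc Nbr x j) - f j (y j) w (zc Nbr y j)| ≤ L * nbrDiff Nbr j x y :=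
    (hLip j (y j) w _ _ hzx (zc_nonneg Nbr y j)).trans
      (mul_le_mul_of_nonneg_left (abs_zc_sub_le Nbr x y j) hL)
  exact (abs_sub_le _ _ _).trans (add_le_add hfirst hthird)

lemma Regular.abs_succProb_sub_le (hReg : Regular Nbr f L B D C)
    (hπ : ∀ i, π i ∈ Set.Icc (0 : ℝ) 1) (x y : State n) (j : Fin n) :
    |succProb Nbr f π x j - succProb Nbr f π y j| ≤
      B * (if x j = y j then 0 else 1) + L * nbrDiff Nbr j x y := by
  set M := B * (if x j = y j then 0 else 1) + L * nbrDiff Nbr j x y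
  obtain ⟨hπ₀, hπ₁⟩ := hπ j
  have hπ₁' : 0 ≤ 1 - π j := by linarith
  calc |succProb Nbr f π x j - succProb Nbr f π y j|
      = |π j * (f j (x j) true (zc Nbr x j) - f j (y j) true (zc Nbr y j)) +
          (1 - π j) * (f j (x j) false (zc Nbr x j) - f j (y j) false (zc Nbr y j))| := by
        unfold succProb; ring_nf
    _ ≤ π j * |f j (x j) true (zc Nbr x j) - f j (y j) true (zc Nbr y j)| +
          (1 - π j) * |f j (x j) false (zc Nbr x j) - f j (y j) false (zc Nbr y j)| := by
        refine (abs_add_le _ _).trans_eq ?_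
        rw [abs_mul, abs_mul, abs_of_nonneg hπ₀, abs_of_nonneg hπ₁']
    _ ≤ π j * M + (1 - π j) * M := by
        gcongr <;> exact hReg.abs_f_sub_le x y j _
    _ = M := by ring

end Dynamics

section SynchronousCoupling

variable {Nbr : Fin n → Finset (Fin n)} {f : Fin n → Bool → Bool → ℝ → ℝ} {π : Fin n → ℝ}
  {ν₁ ν₂ : State n → ℝ} {γ : State n × State n → ℝ}

variable (Nbr f π) in
def stepCoupling (γ : State n × State n → ℝ) (z : State n × State n) : ℝ :=
  ∑ p, γ p * prodCoupling (succProb Nbr f π p.1) (succProb Nbr f π p.2) z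

lemma IsCoupling.stepCoupling (hs : ∀ y i, succProb Nbr f π y i ∈ Set.Icc (0 : ℝ) 1)
    (hγ : IsCoupling γ ν₁ ν₂) :
    IsCoupling (stepCoupling Nbr f π γ) (step Nbr f π ν₁) (step Nbr f π ν₂) := by
  refine ⟨fun z => sum_nonneg fun p _ =>
    mul_nonneg (hγ.1 p) (prodCoupling_nonneg (hs _) (hs _) z), fun x => ?_, fun y => ?_⟩
  · simp only [MRT.stepCoupling, sum_comm (γ := State n), ← mul_sum, sum_prodCoupling_left]
    exact hγ.sum_mul_fst (fun a => kernel Nbr f π a x)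
  · simp only [MRT.stepCoupling, sum_comm (γ := State n), ← mul_sum, sum_prodCoupling_right]
    exact hγ.sum_mul_snd (fun b => kernel Nbr f π b y)

variable (Nbr) in
def nbrCost (γ : State n × State n → ℝ) (i : Fin n) : ℝ :=
  ∑ p, γ p * nbrDiff Nbr i p.1 p.2

def mismatchProb (γ : State n × State n → ℝ) (j : Fin n) : ℝ :=
  ∑ p, γ p * if p.1 j = p.2 j then 0 else 1

lemma nbrCost_nonneg (hγ : ∀ p, 0 ≤ γ p) (i : Fin n) : 0 ≤ nbrCost Nbr γ i :=
  sum_nonneg fun p _ => mul_nonneg (hγ p) (sum_nonneg fun _ _ => by positivity)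

lemma nbrCost_eq_sum_mismatchProb (i : Fin n) :
    nbrCost Nbr γ i = ∑ j ∈ Nbr i, mismatchProb γ j := by
  simp only [nbrCost, mismatchProb, nbrDiff, mul_sum]
  exact sum_comm

lemma WdE_one_eq (ν₁ ν₂ : State n → ℝ) :
    WdE Nbr 1 ν₁ ν₂ = sInf {c | ∃ γ, IsCoupling γ ν₁ ν₂ ∧ c = ⨆ i, nbrCost Nbr γ i} := by
  simp only [WdE, nbrCost, pow_one, Nat.cast_one, inv_one, Real.rpow_one]

lemma WdE_of_isEmpty [IsEmpty (Fin n)] (k : ℕ) (ν₁ ν₂ : State n → ℝ) : WdE Nbr k ν₁ ν₂ = 0 := by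
  refine le_antisymm (Real.sInf_nonpos ?_) (Real.sInf_nonneg ?_) <;>
    rintro _ ⟨γ, -, rfl⟩ <;> simp

lemma mismatchProb_stepCoupling (j : Fin n) :
    mismatchProb (stepCoupling Nbr f π γ) j =
      ∑ p, γ p * |succProb Nbr f π p.1 j - succProb Nbr f π p.2 j| := by
  simp only [mismatchProb, stepCoupling, sum_mul, mul_assoc]
  rw [sum_comm]
  simp only [← mul_sum, sum_prodCoupling_mul_ne]

variable {L B C : ℝ} {D : ℕ}

lemma Regular.mismatchProb_stepCoupling_le (hReg : Regular Nbr f L B D C)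
    (hπ : ∀ i, π i ∈ Set.Icc (0 : ℝ) 1) (hγ : ∀ p, 0 ≤ γ p) (j : Fin n) :
    mismatchProb (stepCoupling Nbr f π γ) j ≤ B * mismatchProb γ j + L * nbrCost Nbr γ j := by
  rw [mismatchProb_stepCoupling, mismatchProb, nbrCost, mul_sum, mul_sum, ← sum_add_distrib]
  refine sum_le_sum fun p _ => ?_
  calc γ p * |succProb Nbr f π p.1 j - succProb Nbr f π p.2 j|
      ≤ γ p * (B * (if p.1 j = p.2 j then 0 else 1) + L * nbrDiff Nbr j p.1 p.2) :=
        mul_le_mul_of_nonneg_left (hReg.abs_succProb_sub_le hπ p.1 p.2 j) (hγ p)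
    _ = _ := by ring

lemma Regular.nbrCost_stepCoupling_le (hReg : Regular Nbr f L B D C)
    (hπ : ∀ i, π i ∈ Set.Icc (0 : ℝ) 1) (hγ : ∀ p, 0 ≤ γ p) (i : Fin n) :
    nbrCost Nbr (stepCoupling Nbr f π γ) i ≤ C * ⨆ j, nbrCost Nbr γ j := by
  set M := ⨆ j, nbrCost Nbr γ j
  have hM : ∀ j, nbrCost Nbr γ j ≤ M := le_ciSup (Set.finite_range _).bddAbove
  have hdeg : ∑ j ∈ Nbr i, nbrCost Nbr γ j ≤ D * M := by
    refine (sum_le_card_nsmul _ _ M fun j _ => hM j).trans ?_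
    rw [nsmul_eq_mul]
    exact mul_le_mul_of_nonneg_right (Nat.cast_le.mpr (hReg.2.2.2.1 i))
      ((nbrCost_nonneg hγ i).trans (hM i))
  calc nbrCost Nbr (stepCoupling Nbr f π γ) i
      ≤ ∑ j ∈ Nbr i, (B * mismatchProb γ j + L * nbrCost Nbr γ j) := by
        rw [nbrCost_eq_sum_mismatchProb]
        exact sum_le_sum fun j _ => hReg.mismatchProb_stepCoupling_le hπ hγ j
    _ = B * nbrCost Nbr γ i + L * ∑ j ∈ Nbr i, nbrCost Nbr γ j := by
        rw [sum_add_distrib, ← mul_sum, ← mul_sum, nbrCost_eq_sum_mismatchProb]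
    _ ≤ B * M + L * (D * M) :=
        add_le_add (mul_le_mul_of_nonneg_left (hM i) (hReg.B_nonneg i))
          (mul_le_mul_of_nonneg_left hdeg hReg.1)
    _ ≤ C * M := by
        have := hReg.2.2.2.2.1
        nlinarith [(nbrCost_nonneg hγ i).trans (hM i)]

end SynchronousCoupling

lemma csInf_le_mul_csInf {S T : Set ℝ} {c : ℝ} (hc : 0 ≤ c) (hS : S.Nonempty) (hT : BddBelow T)
    (h : ∀ s ∈ S, ∃ t ∈ T, t ≤ c * s) : sInf T ≤ c * sInf S := by
  rw [← smul_eq_mul, ← Real.sInf_smul_of_nonneg hc]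
  refine le_csInf hS.smul_set ?_
  rintro _ ⟨s, hs, rfl⟩
  obtain ⟨t, ht, hts⟩ := h s hs
  exact (csInf_le hT ht).trans hts

end MRT

end

open MRT in
theorem WdE_contraction_general
    (n : ℕ) (Nbr : Fin n → Finset (Fin n)) (f : Fin n → Bool → Bool → ℝ → ℝ)
    (π : Fin n → ℝ) (L B C : ℝ) (D : ℕ)
    (hf : PosF f)
    (hπ : ∀ i, π i ∈ Set.Ioo (0 : ℝ) 1)
    (hReg : Regular Nbr f L B D C)
    (ν₁ ν₂ : State n → ℝ) (h₁ : IsDist ν₁) (h₂ : IsDist ν₂) :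
    WdE Nbr 1 (step Nbr f π ν₁) (step Nbr f π ν₂) ≤ C * WdE Nbr 1 ν₁ ν₂ := by
  rcases isEmpty_or_nonempty (Fin n) with hn | hn
  · simp [WdE_of_isEmpty]
  have hπ' : ∀ i, π i ∈ Set.Icc (0 : ℝ) 1 := fun i => Set.Ioo_subset_Icc_self (hπ i)
  rw [WdE_one_eq, WdE_one_eq]
  refine csInf_le_mul_csInf (hReg.C_nonneg hn.some) ⟨_, _, isCoupling_mul h₁ h₂, rfl⟩ ⟨0, ?_⟩ ?_
  · rintro _ ⟨γ, hγ, rfl⟩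
    exact Real.iSup_nonneg (nbrCost_nonneg hγ.1)
  · rintro _ ⟨γ, hγ, rfl⟩
    exact ⟨_, ⟨_, hγ.stepCoupling (succProb_mem_Icc hf hπ'), rfl⟩,
      ciSup_le (hReg.nbrCost_stepCoupling_le hπ' hγ.1)⟩

open MRT in
/-- under the regularity assumptions, the transition kernel is a contraction
for the graph-dependent Wasserstein distance `W_{d_E}`. -/
theorem WdE_contraction
    (n : ℕ) (Nbr : Fin n → Finset (Fin n)) (f : Fin n → Bool → Bool → ℝ → ℝ)
    (π : Fin n → ℝ) (L B C : ℝ) (D : ℕ)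
    (hG : GoodGraph Nbr)
    (hf : PosF f)
    (hπ : ∀ i, π i ∈ Set.Ioo (0 : ℝ) 1)
    (hReg : Regular Nbr f L B D C)
    (ν₁ ν₂ : State n → ℝ) (h₁ : IsDist ν₁) (h₂ : IsDist ν₂) :
    WdE Nbr 1 (step Nbr f π ν₁) (step Nbr f π ν₂) ≤ C * WdE Nbr 1 ν₁ ν₂ :=
  WdE_contraction_general n Nbr f π L B C D hf hπ hReg ν₁ ν₂ h₁ h₂
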